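/- Let M ∈ ℝ^{r̄×r̄} be Hurwitz, N ∈ ℝ^{r̄×n₂}, Φ ∈ ℝ^{r̄×r̄}, Γ ∈ ℝ^{n₂×r̄}, and let T ∈ ℝ^{r̄×r̄} be invertible with T Φ − M T = N Γ; set Ψ := Γ T⁻¹. Let g : [0,∞) → ℝ^{n₂} be continuous, and let differentiable functions ϱ, η : [0,∞) → ℝ^{r̄} and x₂ : [0,∞) → ℝ^{n₂} satisfy ϱ̇(t) = T Φ T⁻¹ ϱ(t), ẋ₂(t) = g(t) − Ψ ϱ(t), and η̇(t) = M η(t) + N g(t) − M N x₂(t). Define the disturbance d(t) := −Ψ ϱ(t) and its estimate d̂₀(t) := −Ψ (η(t) − N x₂(t)). Then, for all initial conditions, d̂₀(t) − d(t) converges to zero exponentially as t → ∞. -/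

import Mathlib

/-!
The estimation error `e := η - N x₂ - ϱ` solves `ė = M e`: the Sylvester equation turns the
exosystem matrix into `T Φ T⁻¹ = M + N Ψ`, and the unknown input `g` cancels. Hence
`e t = exp (t M) e 0` and `d̂₀ - d = -Ψ e` decays as fast as `exp (t M)`.

For the decay of `exp (t M)`, note that `exp M` is a polynomial in `M` (the polynomial
subalgebra is finite-dimensional, hence closed), so by spectral mapping and an eigenvector
computation every eigenvalue of `exp M` is `exp μ` with `μ` an eigenvalue of `M`. For Hurwitz `M`
the spectral radius of `exp M` is therefore `< 1`, Gelfand's formula gives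
`‖exp (k M)‖ = ‖(exp M)ᵏ‖ ≤ rᵏ` for some `r < 1` and large `k`, and the fractional part of `t`
only contributes a factor bounded by compactness of `[0, 1]`.
-/

open Matrix Filter Topology

def Hurwitz {n : Type*} [Fintype n] [DecidableEq n] (A : Matrix n n ℝ) : Prop :=
  ∀ μ ∈ spectrum ℂ (A.map (algebraMap ℝ ℂ)), μ.re < 0

def ExpDecay {E : Type*} [Norm E] (e : ℝ → E) : Prop :=
  ∃ c > (0:ℝ), ∃ lam > (0:ℝ), ∃ T : ℝ, ∀ t ≥ T, ‖e t‖ ≤ c * Real.exp (-lam * t)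

open NormedSpace

theorem ExpDecay.of_norm_le_mul {E F : Type*} [SeminormedAddGroup E] [SeminormedAddGroup F]
    {f : ℝ → E} {g : ℝ → F} (hg : ExpDecay g) (K : ℝ)
    (h : ∀ᶠ t in atTop, ‖f t‖ ≤ K * ‖g t‖) : ExpDecay f := by
  obtain ⟨c, hc, lam, hlam, T, hT⟩ := hg
  obtain ⟨T', hT'⟩ := eventually_atTop.mp h
  refine ⟨(|K| + 1) * c, by positivity, lam, hlam, max T T', fun t ht => ?_⟩
  calc ‖f t‖ ≤ K * ‖g t‖ := hT' t (le_of_max_le_right ht)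
    _ ≤ (|K| + 1) * ‖g t‖ := by gcongr; linarith [le_abs_self K]
    _ ≤ (|K| + 1) * (c * Real.exp (-lam * t)) := by gcongr; exact hT t (le_of_max_le_left ht)
    _ = (|K| + 1) * c * Real.exp (-lam * t) := by ring

section BanachAlgebra

variable {A : Type*} [NormedRing A] [NormedAlgebra ℂ A] [CompleteSpace A]

theorem eventually_norm_pow_le_of_spectralRadius_lt {a : A} {r : NNReal}
    (h : spectralRadius ℂ a < r) : ∀ᶠ k : ℕ in atTop, ‖a ^ k‖ ≤ r ^ k := by
  filter_upwards [(spectrum.pow_nnnorm_pow_one_div_tendsto_nhds_spectralRadius a).eventually_lt_const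
    h, eventually_gt_atTop 0] with k hk hk0
  have hk' : (‖a ^ k‖₊ : ENNReal) < r ^ (k : ℝ) := by
    rwa [one_div, ENNReal.rpow_inv_lt_iff (by positivity)] at hk
  rw [ENNReal.rpow_natCast] at hk'
  exact_mod_cast hk'.le

theorem exp_smul_eq_exp_smul_mul_pow_floor (a : A) (t : ℝ) :
    exp ((t : ℂ) • a) = exp (((t - ⌊t⌋₊ : ℝ) : ℂ) • a) * exp a ^ ⌊t⌋₊ := by
  let : NormedAlgebra ℚ A := .restrictScalars ℚ ℂ A
  have hsplit : (t : ℂ) • a = ((t - ⌊t⌋₊ : ℝ) : ℂ) • a + ⌊t⌋₊ • a := by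
    rw [← Nat.cast_smul_eq_nsmul ℂ, ← add_smul]; push_cast; ring_nf
  rw [hsplit, NormedSpace.exp_add_of_commute ((Commute.refl a).smul_left _ |>.smul_right _),
    NormedSpace.exp_nsmul]

theorem expDecay_exp_smul_of_spectralRadius_exp_lt_one {a : A}
    (h : spectralRadius ℂ (exp a) < 1) : ExpDecay fun t : ℝ => exp ((t : ℂ) • a) := by
  obtain ⟨r, hρr, hr1⟩ := ENNReal.lt_iff_exists_nnreal_btwn.mp h
  have hr0 : (0 : ℝ) < r := by exact_mod_cast pos_of_gt hρr
  have hr1 : (r : ℝ) < 1 := by exact_mod_cast hr1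
  let : NormedAlgebra ℚ A := .restrictScalars ℚ ℂ A
  obtain ⟨K, hK⟩ := (isCompact_Icc (a := (0 : ℝ)) (b := 1)).exists_bound_of_continuousOn
    (exp_continuous.comp (by fun_prop : Continuous fun s : ℝ => (s : ℂ) • a)).continuousOn
  obtain ⟨N, hN⟩ := eventually_atTop.mp (eventually_norm_pow_le_of_spectralRadius_lt hρr)
  refine ⟨max K 1 / r, by positivity, -Real.log r, by simpa using Real.log_neg hr0 hr1, N,
    fun t ht => ?_⟩
  have ht0 : (0 : ℝ) ≤ t := (Nat.cast_nonneg N).trans ht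
  have hfract : t - ⌊t⌋₊ ∈ Set.Icc (0 : ℝ) 1 :=
    ⟨sub_nonneg.mpr (Nat.floor_le ht0), by linarith [Nat.lt_floor_add_one t]⟩
  calc ‖exp ((t : ℂ) • a)‖
      ≤ ‖exp (((t - ⌊t⌋₊ : ℝ) : ℂ) • a)‖ * ‖exp a ^ ⌊t⌋₊‖ := by
        rw [exp_smul_eq_exp_smul_mul_pow_floor]; exact norm_mul_le _ _
    _ ≤ max K 1 * (r : ℝ) ^ ⌊t⌋₊ := by
        gcongr
        · exact (hK _ hfract).trans (le_max_left _ _)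
        · exact hN _ (Nat.le_floor ht)
    _ ≤ max K 1 * (r : ℝ) ^ (t - 1) := by
        gcongr
        rw [← Real.rpow_natCast]
        exact Real.rpow_le_rpow_of_exponent_ge hr0 hr1.le (by linarith [Nat.lt_floor_add_one t])
    _ = max K 1 / r * Real.exp (-(-Real.log r) * t) := by
        rw [Real.rpow_sub hr0, Real.rpow_one, Real.rpow_def_of_pos hr0]
        ring_nf

end BanachAlgebra

namespace Matrix

theorem map_smul_algebraMap {n : Type*} (M : Matrix n n ℝ) (t : ℝ) :
    (t • M).map (algebraMap ℝ ℂ) = (t : ℂ) • M.map (algebraMap ℝ ℂ) := by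
  ext i j
  simp

variable {n : Type*} [Fintype n] [DecidableEq n]

theorem exists_mulVec_eq_smul_of_mem_spectrum {A : Matrix n n ℂ} {μ : ℂ}
    (hμ : μ ∈ spectrum ℂ A) : ∃ v ≠ 0, A *ᵥ v = μ • v := by
  rw [← spectrum_toLin', ← Module.End.hasEigenvalue_iff_mem_spectrum] at hμ
  obtain ⟨v, hv⟩ := hμ.exists_hasEigenvector
  exact ⟨v, hv.2, by simpa using hv.apply_eq_smul⟩

theorem pow_mulVec_of_mulVec_eq_smul {A : Matrix n n ℂ} {v : n → ℂ} {μ : ℂ}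
    (hv : A *ᵥ v = μ • v) (k : ℕ) : (A ^ k) *ᵥ v = μ ^ k • v := by
  induction k with
  | zero => simp
  | succ k ih => rw [pow_succ, ← mulVec_mulVec, hv, mulVec_smul, ih, smul_smul, ← pow_succ']

theorem aeval_mulVec_of_mulVec_eq_smul {A : Matrix n n ℂ} {v : n → ℂ} {μ : ℂ}
    (hv : A *ᵥ v = μ • v) (p : Polynomial ℂ) :
    Polynomial.aeval A p *ᵥ v = p.eval μ • v := by
  rw [Polynomial.aeval_eq_sum_range, Polynomial.eval_eq_sum_range, sum_mulVec, Finset.sum_smul]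
  refine Finset.sum_congr rfl fun k _ => ?_
  rw [smul_mulVec, pow_mulVec_of_mulVec_eq_smul hv, smul_smul]

open scoped Matrix.Norms.L2Operator

theorem exp_mulVec_of_mulVec_eq_smul {A : Matrix n n ℂ} {v : n → ℂ} {μ : ℂ}
    (hv : A *ᵥ v = μ • v) : exp A *ᵥ v = Complex.exp μ • v := by
  have hseries := (exp_series_hasSum_exp' (𝕂 := ℂ) A).map ((mulVecBilin ℂ ℂ).flip v)
    (Continuous.matrix_mulVec continuous_id continuous_const)
  have hterm (k : ℕ) : (mulVecBilin ℂ ℂ).flip v ((k.factorial : ℂ)⁻¹ • A ^ k)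
      = ((k.factorial : ℂ)⁻¹ * μ ^ k) • v := by
    simp [mulVecBilin_apply, pow_mulVec_of_mulVec_eq_smul hv, smul_smul]
  simp only [Function.comp_def, hterm] at hseries
  have hscalar := (exp_series_hasSum_exp' (𝕂 := ℂ) μ).smul_const v
  simp only [smul_eq_mul] at hscalar
  rw [Complex.exp_eq_exp_ℂ]
  exact hseries.unique hscalar

theorem exists_exp_eq_aeval (A : Matrix n n ℂ) :
    ∃ p : Polynomial ℂ, exp A = Polynomial.aeval A p := by
  have hclosed : IsClosed ((Polynomial.aeval (R := ℂ) A).range.toSubmodule : Set (Matrix n n ℂ)) :=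
    Submodule.closed_of_finiteDimensional _
  have hA : A ∈ (Polynomial.aeval (R := ℂ) A).range := ⟨Polynomial.X, Polynomial.aeval_X A⟩
  have hpartial (m : ℕ) :
      ∑ k ∈ Finset.range m, ((k.factorial : ℂ)⁻¹ • A ^ k) ∈ (Polynomial.aeval (R := ℂ) A).range :=
    Subalgebra.sum_mem _ fun k _ => Subalgebra.smul_mem _ (pow_mem hA k) _
  obtain ⟨p, hp⟩ := hclosed.mem_of_tendsto
    (exp_series_hasSum_exp' (𝕂 := ℂ) A).tendsto_sum_nat (.of_forall hpartial)
  exact ⟨p, hp.symm⟩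

theorem spectrum_exp_subset (A : Matrix n n ℂ) :
    spectrum ℂ (exp A) ⊆ Complex.exp '' spectrum ℂ A := by
  cases isEmpty_or_nonempty n
  · simp [spectrum.of_subsingleton]
  obtain ⟨p, hp⟩ := exists_exp_eq_aeval A
  intro μ hμ
  rw [hp, spectrum.map_polynomial_aeval] at hμ
  obtain ⟨z, hz, rfl⟩ := hμ
  obtain ⟨v, hv0, hv⟩ := exists_mulVec_eq_smul_of_mem_spectrum hz
  refine ⟨z, hz, smul_left_injective ℂ hv0 ?_⟩
  show Complex.exp z • v = p.eval z • v
  rw [← exp_mulVec_of_mulVec_eq_smul hv, hp, aeval_mulVec_of_mulVec_eq_smul hv]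

theorem spectralRadius_exp_lt_one {A : Matrix n n ℂ} (hA : ∀ μ ∈ spectrum ℂ A, μ.re < 0) :
    spectralRadius ℂ (exp A) < 1 := by
  rcases (spectrum ℂ (exp A)).eq_empty_or_nonempty with h | h
  · simp [spectralRadius, h]
  refine spectrum.spectralRadius_lt_of_forall_lt_of_nonempty h fun μ hμ => ?_
  obtain ⟨z, hz, rfl⟩ := spectrum_exp_subset A hμ
  rw [← NNReal.coe_lt_coe, coe_nnnorm, Complex.norm_exp]
  exact Real.exp_lt_one_iff.mpr (hA z hz)

theorem exp_map_algebraMap (B : Matrix n n ℝ) :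
    (exp B).map (algebraMap ℝ ℂ) = exp (B.map (algebraMap ℝ ℂ)) :=
  let : NormedAlgebra ℚ (Matrix n n ℝ) := .restrictScalars ℚ ℝ _
  let : NormedAlgebra ℚ (Matrix n n ℂ) := .restrictScalars ℚ ℂ _
  map_exp (algebraMap ℝ ℂ).mapMatrix (continuous_id.matrix_map Complex.continuous_ofReal) B

theorem exists_norm_le_mul_norm_map_algebraMap :
    ∃ K : ℝ, ∀ B : Matrix n n ℝ, ‖B‖ ≤ K * ‖B.map (algebraMap ℝ ℂ)‖ := by
  obtain ⟨K, -, hK⟩ := ((Algebra.ofId ℝ ℂ).mapMatrix (m := n)).toLinearMap.exists_antilipschitzWith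
    (LinearMap.ker_eq_bot.mpr (map_injective (algebraMap ℝ ℂ).injective))
  exact ⟨K, fun B => ZeroHomClass.bound_of_antilipschitz _ hK B⟩

end Matrix

section Hurwitz

open scoped Matrix.Norms.L2Operator

variable {n : Type*} [Fintype n] [DecidableEq n] {M : Matrix n n ℝ}

theorem Hurwitz.expDecay_exp_smul (hM : Hurwitz M) : ExpDecay fun t : ℝ => exp (t • M) := by
  obtain ⟨K, hK⟩ := Matrix.exists_norm_le_mul_norm_map_algebraMap (n := n)
  have hdecay := expDecay_exp_smul_of_spectralRadius_exp_lt_one (A := Matrix n n ℂ)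
    (Matrix.spectralRadius_exp_lt_one (A := M.map (algebraMap ℝ ℂ)) hM)
  refine hdecay.of_norm_le_mul K (.of_forall fun t => ?_)
  rw [← Matrix.map_smul_algebraMap, ← Matrix.exp_map_algebraMap]
  exact hK _

theorem Hurwitz.expDecay_exp_smul_toEuclideanCLM (hM : Hurwitz M) :
    ExpDecay fun t : ℝ => exp (t • Matrix.toEuclideanCLM (𝕜 := ℝ) M) := by
  refine hM.expDecay_exp_smul.of_norm_le_mul 1 (.of_forall fun t => ?_)
  let : NormedAlgebra ℚ (Matrix n n ℝ) := .restrictScalars ℚ ℝ _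
  let : NormedAlgebra ℚ (EuclideanSpace ℝ n →L[ℝ] EuclideanSpace ℝ n) := .restrictScalars ℚ ℝ _
  have hcont : Continuous (Matrix.toEuclideanCLM (𝕜 := ℝ) (n := n)) :=
    LinearMap.continuous_of_finiteDimensional
      (LinearMapClass.linearMap (Matrix.toEuclideanCLM (𝕜 := ℝ) (n := n)))
  rw [one_mul, Matrix.cstar_norm_def, ← map_smul, map_exp _ hcont]

end Hurwitz

theorem eq_exp_smul_apply_of_hasDerivAt {E : Type*} [NormedAddCommGroup E] [NormedSpace ℝ E]
    [CompleteSpace E] (L : E →L[ℝ] E) {e : ℝ → E} (he : ∀ t ≥ 0, HasDerivAt e (L (e t)) t)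
    {t : ℝ} (ht : 0 ≤ t) : e t = exp (t • L) (e 0) := by
  have hsol (s : ℝ) : HasDerivAt (fun s : ℝ => exp (s • L) (e 0)) (L (exp (s • L) (e 0))) s :=
    (ContinuousLinearMap.apply ℝ E (e 0)).hasFDerivAt.comp_hasDerivAt s
      (hasDerivAt_exp_smul_const' L s)
  refine ODE_solution_unique_of_mem_Icc_right (v := fun _ => L) (s := fun _ => Set.univ)
    (fun _ _ => L.lipschitz.lipschitzOnWith)
    (fun s hs => (he s hs.1).continuousAt.continuousWithinAt)
    (fun s hs => (he s hs.1).hasDerivWithinAt) (fun _ _ => trivial)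
    (fun s _ => (hsol s).continuousAt.continuousWithinAt)
    (fun s _ => (hsol s).hasDerivWithinAt) (fun _ _ => trivial) ?_ ⟨ht, le_rfl⟩
  simp

theorem Matrix.mul_mul_nonsing_inv_eq_add_of_sub_eq {R r m : Type*} [CommRing R] [Fintype r]
    [DecidableEq r] [Fintype m] {M Φ T : Matrix r r R} {N : Matrix r m R} {Γ : Matrix m r R}
    (hT : IsUnit T) (hSyl : T * Φ - M * T = N * Γ) : T * Φ * T⁻¹ = M + N * (Γ * T⁻¹) := by
  rw [sub_eq_iff_eq_add'.mp hSyl, add_mul, Matrix.mul_assoc, Matrix.mul_assoc,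
    T.mul_nonsing_inv ((T.isUnit_iff_isUnit_det).mp hT), Matrix.mul_one]

theorem hasDerivAt_observer_error {r m : Type*} [Fintype r] [DecidableEq r] [Fintype m]
    [DecidableEq m] {M : Matrix r r ℝ} {N : Matrix r m ℝ} {Ψ : Matrix m r ℝ}
    {ϱ η : ℝ → EuclideanSpace ℝ r} {x₂ : ℝ → EuclideanSpace ℝ m} {u : EuclideanSpace ℝ m} {t : ℝ}
    (hϱ : HasDerivAt ϱ (toEuclideanLin (M + N * Ψ) (ϱ t)) t)
    (hx₂ : HasDerivAt x₂ (u - toEuclideanLin Ψ (ϱ t)) t)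
    (hη : HasDerivAt η
      (toEuclideanLin M (η t) + toEuclideanLin N u - toEuclideanLin (M * N) (x₂ t)) t) :
    HasDerivAt (fun s => η s - toEuclideanLin N (x₂ s) - ϱ s)
      (toEuclideanLin M (η t - toEuclideanLin N (x₂ t) - ϱ t)) t := by
  have hNx₂ :=
    (LinearMap.toContinuousLinearMap (toEuclideanLin N)).hasFDerivAt.comp_hasDerivAt t hx₂
  refine ((hη.sub hNx₂).sub hϱ).congr_deriv ?_
  simp only [map_add, map_sub, LinearMap.add_apply, Matrix.toLpLin_mul_same, LinearMap.comp_apply,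
    LinearMap.coe_toContinuousLinearMap']
  abel

theorem stmt2_general {rbar n₂ : ℕ}
    (M Φ T : Matrix (Fin rbar) (Fin rbar) ℝ)
    (N : Matrix (Fin rbar) (Fin n₂) ℝ) (Γ : Matrix (Fin n₂) (Fin rbar) ℝ)
    (hM : Hurwitz M) (hT : IsUnit T) (hSyl : T * Φ - M * T = N * Γ)
    (g : ℝ → EuclideanSpace ℝ (Fin n₂))
    (ϱ η : ℝ → EuclideanSpace ℝ (Fin rbar)) (x₂ : ℝ → EuclideanSpace ℝ (Fin n₂))
    (hϱ : ∀ t ≥ (0:ℝ), HasDerivAt ϱ (Matrix.toEuclideanLin (T * Φ * T⁻¹) (ϱ t)) t)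
    (hx₂ : ∀ t ≥ (0:ℝ), HasDerivAt x₂
      (g t - Matrix.toEuclideanLin (Γ * T⁻¹) (ϱ t)) t)
    (hη : ∀ t ≥ (0:ℝ), HasDerivAt η
      (Matrix.toEuclideanLin M (η t) + Matrix.toEuclideanLin N (g t)
        - Matrix.toEuclideanLin (M * N) (x₂ t)) t) :
    ExpDecay (fun t =>
      (-(Matrix.toEuclideanLin (Γ * T⁻¹) (η t - Matrix.toEuclideanLin N (x₂ t))))
        - (-(Matrix.toEuclideanLin (Γ * T⁻¹) (ϱ t)))) := by
  rw [Matrix.mul_mul_nonsing_inv_eq_add_of_sub_eq hT hSyl] at hϱ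
  set e := fun t => η t - toEuclideanLin N (x₂ t) - ϱ t
  set L := toEuclideanCLM (𝕜 := ℝ) M
  have he (t : ℝ) (ht : 0 ≤ t) : HasDerivAt e (L (e t)) t :=
    hasDerivAt_observer_error (hϱ t ht) (hx₂ t ht) (hη t ht)
  set P := LinearMap.toContinuousLinearMap (toEuclideanLin (Γ * T⁻¹))
  refine hM.expDecay_exp_smul_toEuclideanCLM.of_norm_le_mul (‖P‖ * ‖e 0‖)
    ((eventually_ge_atTop 0).mono fun t ht => ?_)
  calc ‖-P (η t - toEuclideanLin N (x₂ t)) - -P (ϱ t)‖ = ‖P (e t)‖ := by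
        rw [neg_sub_neg, ← map_sub, ← norm_neg, ← map_neg, neg_sub]
    _ ≤ ‖P‖ * ‖exp (t • L) (e 0)‖ := by
        rw [← eq_exp_smul_apply_of_hasDerivAt L he ht]; exact P.le_opNorm _
    _ ≤ ‖P‖ * ‖e 0‖ * ‖exp (t • L)‖ := by
        rw [mul_assoc, mul_comm ‖e 0‖]; gcongr; exact (exp (t • L)).le_opNorm _

/-- With known frequencies the disturbance estimate
`d̂₀ := −Ψ (η − N x₂)` converges exponentially to the disturbance `d = −Ψ ϱ`. -/
theorem stmt2 {rbar n₂ : ℕ}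
    (M Φ T : Matrix (Fin rbar) (Fin rbar) ℝ)
    (N : Matrix (Fin rbar) (Fin n₂) ℝ) (Γ : Matrix (Fin n₂) (Fin rbar) ℝ)
    (hM : Hurwitz M) (hT : IsUnit T) (hSyl : T * Φ - M * T = N * Γ)
    (g : ℝ → EuclideanSpace ℝ (Fin n₂)) (hg : ContinuousOn g (Set.Ici 0))
    (ϱ η : ℝ → EuclideanSpace ℝ (Fin rbar)) (x₂ : ℝ → EuclideanSpace ℝ (Fin n₂))
    (hϱ : ∀ t ≥ (0:ℝ), HasDerivAt ϱ (Matrix.toEuclideanLin (T * Φ * T⁻¹) (ϱ t)) t)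
    (hx₂ : ∀ t ≥ (0:ℝ), HasDerivAt x₂
      (g t - Matrix.toEuclideanLin (Γ * T⁻¹) (ϱ t)) t)
    (hη : ∀ t ≥ (0:ℝ), HasDerivAt η
      (Matrix.toEuclideanLin M (η t) + Matrix.toEuclideanLin N (g t)
        - Matrix.toEuclideanLin (M * N) (x₂ t)) t) :
    ExpDecay (fun t =>
      (-(Matrix.toEuclideanLin (Γ * T⁻¹) (η t - Matrix.toEuclideanLin N (x₂ t))))
        - (-(Matrix.toEuclideanLin (Γ * T⁻¹) (ϱ t)))) :=
  stmt2_general M Φ T N Γ hM hT hSyl g ϱ η x₂ hϱ hx₂ hη
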